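/- Let n ≥ 5 be an integer, A = (n(n-4)+8)/2, B = n²(n-4)²/16, and let v : ℝ → ℝ be a C⁴ function. Define u on ℝⁿ \ {0} by u(x) = |x|^{−(n−4)/2}·v(ln|x|). Then u is C⁴ on ℝⁿ \ {0} and for every x ∈ ℝⁿ \ {0}, Δ²u(x) = |x|^{−(n+4)/2}·( v''''(ln|x|) − A·v''(ln|x|) + B·v(ln|x|) ). In particular, u solves Δ²u(x) = |x|^{−(n+4)/2}·g(|x|^{(n−4)/2}·u(x)) on ℝⁿ \ {0} if and only if v solves v'''' − A·v'' + B·v = g(v) on ℝ (for any function g on (0,∞), when v > 0). -/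

import Mathlib

open Real Filter Set

noncomputable section

/-- The Laplacian of `f : ℝⁿ → ℝ`, as the sum of the second partial derivatives. -/
def lap (n : ℕ) (f : EuclideanSpace ℝ (Fin n) → ℝ) (x : EuclideanSpace ℝ (Fin n)) : ℝ :=
  ∑ i : Fin n,
    fderiv ℝ (fun y => fderiv ℝ f y (EuclideanSpace.single i 1)) x (EuclideanSpace.single i 1)

/-- The Bilaplacian `Δ² = Δ ∘ Δ`. -/
def bilap (n : ℕ) (f : EuclideanSpace ℝ (Fin n) → ℝ) : EuclideanSpace ℝ (Fin n) → ℝ :=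
  lap n (lap n f)

/-
In the variable `t = ln r`, `r = |x|`, the Laplacian maps the radial function `r ^ p * w t` to
`r ^ (p - 2) * ((p ^ 2 + (n - 2) p) w + (2 p + n - 2) w' + w'')`. For the Emden–Fowler exponent
`p = -(n - 4) / 2` the first-order coefficient is `2`, and at the second application, with exponent
`p - 2`, it is `-2`; so the odd derivatives cancel in `Δ² u` and what is left is
`r ^ (-(n + 4) / 2) * (v'''' - A v'' + B v)`. Since `ln |x|` takes every real value on `ℝⁿ \ {0}`,
the equation for `u` is the equation for `v`.
-/

lemma lap_congr_of_eventuallyEq {n : ℕ} {f g : EuclideanSpace ℝ (Fin n) → ℝ}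
    {x : EuclideanSpace ℝ (Fin n)} (h : f =ᶠ[nhds x] g) : lap n f x = lap n g x := by
  refine Finset.sum_congr rfl fun i _ => ?_
  have h' : (fun y => fderiv ℝ f y (EuclideanSpace.single i 1)) =ᶠ[nhds x]
      (fun y => fderiv ℝ g y (EuclideanSpace.single i 1)) :=
    (h.fderiv (𝕜 := ℝ)).mono fun y hy => by simp only [hy]
  rw [h'.fderiv_eq]

lemma lap_comp_norm_sq {n : ℕ} {F F' F'' : ℝ → ℝ}
    (hF : ∀ s, 0 < s → HasDerivAt F (F' s) s) (hF' : ∀ s, 0 < s → HasDerivAt F' (F'' s) s)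
    {x : EuclideanSpace ℝ (Fin n)} (hx : x ≠ 0) :
    lap n (fun y => F (‖y‖ ^ 2)) x = 2 * n * F' (‖x‖ ^ 2) + 4 * ‖x‖ ^ 2 * F'' (‖x‖ ^ 2) := by
  have hcomp : ∀ {G G' : ℝ → ℝ}, (∀ s, 0 < s → HasDerivAt G (G' s) s) →
      ∀ y : EuclideanSpace ℝ (Fin n), y ≠ 0 →
        HasFDerivAt (fun y => G (‖y‖ ^ 2)) (G' (‖y‖ ^ 2) • 2 • innerSL ℝ y) y :=
    fun hG y hy => (hG _ (pow_pos (norm_pos_iff.mpr hy) 2)).comp_hasFDerivAt y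
      (hasStrictFDerivAt_norm_sq y).hasFDerivAt
  have hpartial : ∀ i : Fin n,
      (fun y => fderiv ℝ (fun y => F (‖y‖ ^ 2)) y (EuclideanSpace.single i 1)) =ᶠ[nhds x]
        fun y => F' (‖y‖ ^ 2) * (2 * y i) := by
    intro i
    filter_upwards [isOpen_compl_singleton.mem_nhds hx] with y hy
    simp [(hcomp hF y hy).fderiv, EuclideanSpace.inner_single_right]
  have hsecond : ∀ i : Fin n,
      fderiv ℝ (fun y => fderiv ℝ (fun y => F (‖y‖ ^ 2)) y (EuclideanSpace.single i 1)) x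
        (EuclideanSpace.single i 1) = 2 * F' (‖x‖ ^ 2) + 4 * F'' (‖x‖ ^ 2) * x i ^ 2 := by
    intro i
    have hd : HasFDerivAt (fun y => F' (‖y‖ ^ 2) * (2 * y i)) _ x :=
      (hcomp hF' x hx).mul ((EuclideanSpace.proj (𝕜 := ℝ) i).hasFDerivAt.const_mul 2)
    rw [(hpartial i).fderiv_eq, hd.fderiv]
    simp [EuclideanSpace.inner_single_right]
    ring
  rw [lap, Finset.sum_congr rfl fun i _ => hsecond i]
  simp only [Finset.sum_add_distrib, Finset.sum_const, ← Finset.mul_sum,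
    ← EuclideanSpace.real_norm_sq_eq, Finset.card_univ, Fintype.card_fin, nsmul_eq_mul]
  ring

lemma hasDerivAt_rpow_mul_comp_log_div_two (γ : ℝ) {w w' : ℝ → ℝ}
    (hw : ∀ t, HasDerivAt w (w' t) t) {s : ℝ} (hs : 0 < s) :
    HasDerivAt (fun s => s ^ γ * w (log s / 2))
      (s ^ (γ - 1) * (γ * w (log s / 2) + w' (log s / 2) / 2)) s := by
  have h : HasDerivAt (fun s => s ^ γ * w (log s / 2)) _ s :=
    (hasDerivAt_rpow_const (p := γ) (Or.inl hs.ne')).mul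
      ((hw _).comp s ((hasDerivAt_log hs.ne').div_const 2))
  convert h using 1
  rw [rpow_sub_one hs.ne']
  field_simp

theorem lap_norm_rpow_mul_comp_log (n : ℕ) (p : ℝ) {w w' w'' : ℝ → ℝ}
    (hw : ∀ t, HasDerivAt w (w' t) t) (hw' : ∀ t, HasDerivAt w' (w'' t) t)
    {x : EuclideanSpace ℝ (Fin n)} (hx : x ≠ 0) :
    lap n (fun y => ‖y‖ ^ p * w (log ‖y‖)) x = ‖x‖ ^ (p - 2) *
      ((p ^ 2 + (n - 2) * p) * w (log ‖x‖) + (2 * p + n - 2) * w' (log ‖x‖)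
        + w'' (log ‖x‖)) := by
  have hsq : ∀ (r : ℝ), 0 ≤ r → ∀ q : ℝ, (r ^ 2) ^ (q / 2) = r ^ q := fun r hr q => by
    rw [← rpow_natCast, ← rpow_mul hr]
    congr 1
    ring
  have hlog : ∀ r : ℝ, log (r ^ 2) / 2 = log r := fun r => by
    rw [log_pow]
    push_cast
    ring
  have hradial : (fun y : EuclideanSpace ℝ (Fin n) => ‖y‖ ^ p * w (log ‖y‖)) =
      fun y => (fun s => s ^ (p / 2) * w (log s / 2)) (‖y‖ ^ 2) := by
    funext y
    dsimp only
    rw [hsq _ (norm_nonneg y), hlog]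
  rw [hradial, lap_comp_norm_sq (fun s hs => hasDerivAt_rpow_mul_comp_log_div_two _ hw hs)
    (fun s hs => hasDerivAt_rpow_mul_comp_log_div_two (p / 2 - 1)
      (w := fun t => p / 2 * w t + w' t / 2)
      (fun t => ((hw t).const_mul (p / 2)).add ((hw' t).div_const 2)) hs) hx]
  have hr : 0 < ‖x‖ := norm_pos_iff.mpr hx
  have hexp₁ : (‖x‖ ^ 2) ^ (p / 2 - 1) = ‖x‖ ^ (p - 2) := by
    rw [show p / 2 - 1 = (p - 2) / 2 by ring, hsq _ hr.le]
  have hexp₂ : (‖x‖ ^ 2) ^ (p / 2 - 1 - 1) = ‖x‖ ^ (p - 2) / ‖x‖ ^ 2 := by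
    rw [rpow_sub_one (pow_pos hr 2).ne', hexp₁]
  rw [hexp₁, hexp₂, hlog]
  field_simp
  ring

lemma hasDerivAt_iteratedDeriv {N : ℕ} {v : ℝ → ℝ} (hv : ContDiff ℝ N v) {k : ℕ} (hk : k < N)
    (t : ℝ) : HasDerivAt (iteratedDeriv k v) (iteratedDeriv (k + 1) v t) t := by
  rw [iteratedDeriv_succ]
  exact (hv.differentiable_iteratedDeriv k (by exact_mod_cast hk) t).hasDerivAt

theorem bilap_emdenFowler (n : ℕ) {v : ℝ → ℝ} (hv : ContDiff ℝ 4 v)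
    {x : EuclideanSpace ℝ (Fin n)} (hx : x ≠ 0) :
    bilap n (fun y => ‖y‖ ^ (-((n - 4) / 2 : ℝ)) * v (log ‖y‖)) x =
      ‖x‖ ^ (-((n + 4) / 2 : ℝ)) *
        (iteratedDeriv 4 v (log ‖x‖) - (n * (n - 4) + 8) / 2 * iteratedDeriv 2 v (log ‖x‖)
          + n ^ 2 * (n - 4) ^ 2 / 16 * v (log ‖x‖)) := by
  set p : ℝ := -((n - 4) / 2)
  set D : ℕ → ℝ → ℝ := fun k => iteratedDeriv k v
  have hD : ∀ k < 4, ∀ t, HasDerivAt (D k) (D (k + 1) t) t := fun k hk =>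
    hasDerivAt_iteratedDeriv hv hk
  have hD₀ : D 0 = v := iteratedDeriv_zero
  have hfirst : ∀ k < 2, ∀ t, HasDerivAt
      (fun t => (p ^ 2 + (n - 2) * p) * D k t + (2 * p + n - 2) * D (k + 1) t + D (k + 2) t)
      ((p ^ 2 + (n - 2) * p) * D (k + 1) t + (2 * p + n - 2) * D (k + 2) t + D (k + 3) t) t :=
    fun k hk t => ((((hD k (by omega) t).const_mul _).add
      ((hD (k + 1) (by omega) t).const_mul _)).add (hD (k + 2) (by omega) t))
  have hlap : lap n (fun y => ‖y‖ ^ p * v (log ‖y‖)) =ᶠ[nhds x] fun y => ‖y‖ ^ (p - 2) *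
      ((p ^ 2 + (n - 2) * p) * D 0 (log ‖y‖) + (2 * p + n - 2) * D 1 (log ‖y‖)
        + D 2 (log ‖y‖)) := by
    filter_upwards [isOpen_compl_singleton.mem_nhds hx] with y hy
    rw [← hD₀]
    exact lap_norm_rpow_mul_comp_log n p (hD 0 (by norm_num)) (hD 1 (by norm_num)) hy
  rw [bilap, lap_congr_of_eventuallyEq hlap,
    lap_norm_rpow_mul_comp_log n (p - 2) (hfirst 0 (by norm_num)) (hfirst 1 (by norm_num)) hx,
    show p - 2 - 2 = -((n + 4) / 2 : ℝ) by ring]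
  simp only [D, hD₀]
  ring

lemma contDiffOn_norm_rpow_mul_comp_log {E : Type*} [NormedAddCommGroup E]
    [InnerProductSpace ℝ E] {k : WithTop ℕ∞} (p : ℝ) {v : ℝ → ℝ} (hv : ContDiff ℝ k v) :
    ContDiffOn ℝ k (fun y : E => ‖y‖ ^ p * v (log ‖y‖)) {0}ᶜ := by
  intro x hx
  have hnorm : ContDiffAt ℝ k (‖·‖) x := contDiffAt_norm ℝ hx
  have hx' : ‖x‖ ≠ 0 := norm_ne_zero_iff.mpr hx
  exact (((contDiffAt_rpow_const_of_ne hx').comp x hnorm).mul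
    (hv.contDiffAt.comp x ((contDiffAt_log.mpr hx').comp x hnorm))).contDiffWithinAt

lemma forall_ne_zero_log_norm_iff {E : Type*} [NormedAddCommGroup E] [NormedSpace ℝ E]
    [Nontrivial E] {P : ℝ → Prop} : (∀ x : E, x ≠ 0 → P (log ‖x‖)) ↔ ∀ t, P t := by
  refine ⟨fun h t => ?_, fun h x _ => h _⟩
  obtain ⟨x, hx⟩ := exists_norm_eq E (exp_pos t).le
  have hx0 : x ≠ 0 := by
    rintro rfl
    exact (exp_pos t).ne' (hx.symm.trans norm_zero)
  simpa [hx] using h x hx0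

theorem stmt_16 (n : ℕ) (hn : 5 ≤ n)
    (A B : ℝ) (hA : A = ((n : ℝ) * ((n : ℝ) - 4) + 8) / 2)
    (hB : B = (n : ℝ) ^ 2 * ((n : ℝ) - 4) ^ 2 / 16)
    (v : ℝ → ℝ) (hv : ContDiff ℝ 4 v)
    (u : EuclideanSpace ℝ (Fin n) → ℝ)
    (hu : ∀ x : EuclideanSpace ℝ (Fin n),
      u x = ‖x‖ ^ (-(((n : ℝ) - 4) / 2)) * v (Real.log ‖x‖)) :
    ContDiffOn ℝ 4 u {(0 : EuclideanSpace ℝ (Fin n))}ᶜ ∧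
    (∀ x : EuclideanSpace ℝ (Fin n), x ≠ 0 →
      bilap n u x = ‖x‖ ^ (-(((n : ℝ) + 4) / 2)) *
        (iteratedDeriv 4 v (Real.log ‖x‖) - A * iteratedDeriv 2 v (Real.log ‖x‖)
          + B * v (Real.log ‖x‖))) ∧
    (∀ g : ℝ → ℝ, (∀ t, 0 < v t) →
      ((∀ x : EuclideanSpace ℝ (Fin n), x ≠ 0 →
          bilap n u x = ‖x‖ ^ (-(((n : ℝ) + 4) / 2)) * g (‖x‖ ^ (((n : ℝ) - 4) / 2) * u x)) ↔
        (∀ t : ℝ, iteratedDeriv 4 v t - A * iteratedDeriv 2 v t + B * v t = g (v t)))) := by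
  obtain rfl : u = fun y => ‖y‖ ^ (-(((n : ℝ) - 4) / 2)) * v (log ‖y‖) := funext hu
  subst hA hB
  have hbilap := fun (x : EuclideanSpace ℝ (Fin n)) (hx : x ≠ 0) => bilap_emdenFowler n hv hx
  have hrescale : ∀ x : EuclideanSpace ℝ (Fin n), x ≠ 0 →
      ‖x‖ ^ (((n : ℝ) - 4) / 2) * (‖x‖ ^ (-(((n : ℝ) - 4) / 2)) * v (log ‖x‖)) =
        v (log ‖x‖) := fun x hx => by
    rw [← mul_assoc, ← rpow_add (norm_pos_iff.mpr hx), add_neg_cancel, rpow_zero, one_mul]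
  have : Nonempty (Fin n) := ⟨⟨0, by omega⟩⟩
  refine ⟨contDiffOn_norm_rpow_mul_comp_log _ hv, hbilap, fun g _ => ?_⟩
  refine Iff.trans (forall₂_congr fun x hx => ?_) forall_ne_zero_log_norm_iff
  rw [hbilap x hx, hrescale x hx,
    mul_right_inj' (rpow_pos_of_pos (norm_pos_iff.mpr hx) _).ne']
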